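/- arXiv:1412.7788 — 3 statements merged into one kernel-verified Lean document; each statement's English description precedes it below -/
import Mathlib

section
/- Let $N \ge 2$ and $H = \mathbb{C}^N$ with standard basis $(e_i)_{i=1}^N$. For a non-crossing pair partition $p$ of $\{1,\dots,k\}$ (with $k$ even), define the vector $T_p = \sum_{i_1,\dots,i_k=1}^N \delta^p_i \, e_{i_1} \otimes \cdots \otimes e_{i_k} \in H^{\otimes k}$, where $\delta^p_i = 1$ if $i_l = i_m$ for every pair $\{l,m\} \in p$ and $0$ otherwise. Then the family $(T_p)_{p \in NC_2(k)}$ indexed by all non-crossing pair partitions of $\{1,\dots,k\}$ is linearly independent. -/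
/-!
Evaluate the vectors at test tuples. The tuple `x_p` colours `l` by the parity of `l`, flipped at
the openers of `p`. Every arc of a non-crossing pair partition has odd length, so `x_p` is constant
on the blocks of `p`, i.e. `T_p (x_p) = 1`, while `T_q (x_p) ≠ 0` forces `q` to pair each opener
of `p` with a closer of `p`. For such `q` the signed sum `∑ ± (q l - l)`, with sign `+` at the
openers of `p`, does not depend on `q`; it equals the total displacement `∑ |p l - l|` of `p` and is
at most that of `q`, with equality only if `p` and `q` have the same openers, hence only if
`q = p`. So the matrix `(T_q (x_p))` is triangular with respect to total displacement, with
nonzero diagonal.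
-/

/-- A fixed-point-free involution `p` of `Fin k` encodes a pair partition of `{1,…,k}`;
the non-crossing condition says there are no pairs `{a,b}`, `{c,d}` with `a < c < b < d`. -/
def IsNC2 {k : ℕ} (p : Fin k → Fin k) : Prop :=
  (∀ l, p (p l) = l) ∧ (∀ l, p l ≠ l) ∧
    ∀ a c : Fin k, a < c → c < p a → p a < p c → False

/-- The vector `T_p ∈ (ℂ^N)^{⊗ k}`, modelled as a function on index tuples:
its coordinate at `(i_1,…,i_k)` is `1` if the tuple is constant on the blocks of `p`,
and `0` otherwise. -/
noncomputable def Tvec {k N : ℕ} (p : Fin k → Fin k) : (Fin k → Fin N) → ℂ :=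
  fun i => if ∀ l, i (p l) = i l then 1 else 0

open Finset

theorem Finset.even_card_of_involution {α : Type*} {s : Finset α} (g : α → α)
    (hmem : ∀ a ∈ s, g a ∈ s) (hg : ∀ a ∈ s, g (g a) = a) (hne : ∀ a ∈ s, g a ≠ a) :
    Even #s := by
  rw [← ZMod.natCast_eq_zero_iff_even, card_eq_sum_ones, Nat.cast_sum, Nat.cast_one]
  exact sum_involution (fun a _ => g a) (fun _ _ => by decide) (fun a ha _ => hne a ha) hmem hg

theorem linearIndependent_of_triangular_eval {ι X R β : Type*} [Ring R] [NoZeroDivisors R]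
    [LinearOrder β] (v : ι → X → R) (x : ι → X) (f : ι → β)
    (hdiag : ∀ i, v i (x i) ≠ 0) (htri : ∀ i j, v j (x i) ≠ 0 → j = i ∨ f i < f j) :
    LinearIndependent R v := by
  classical
  rw [linearIndependent_iff']
  intro s g hsum i hi
  by_contra hgi
  obtain ⟨i₀, hi₀, hmax⟩ :=
    (s.filter fun j => g j ≠ 0).exists_max_image f ⟨i, mem_filter.mpr ⟨hi, hgi⟩⟩
  rw [mem_filter] at hi₀
  have hoff : ∀ j ∈ s, j ≠ i₀ → g j * v j (x i₀) = 0 := by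
    intro j hj hji₀
    by_contra hne
    obtain ⟨hgj, hvj⟩ := mul_ne_zero_iff.mp hne
    have hfj := hmax j (mem_filter.mpr ⟨hj, hgj⟩)
    exact (htri i₀ j hvj).elim hji₀ fun h => h.not_ge hfj
  have heval := congrFun hsum (x i₀)
  simp only [Finset.sum_apply, Pi.smul_apply, smul_eq_mul, Pi.zero_apply] at heval
  rw [sum_eq_single_of_mem i₀ hi₀.1 hoff] at heval
  exact mul_ne_zero hi₀.2 (hdiag i₀) heval

theorem Function.Involutive.sum_mul_sub_eq_neg_two_mul_sum {α R : Type*} [Fintype α] [CommRing R]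
    {q : α → α} (hq : Function.Involutive q) {s v : α → R} (hs : ∀ a, s (q a) = -s a) :
    ∑ a, s a * (v (q a) - v a) = -2 * ∑ a, s a * v a := by
  have hreindex : ∑ a, s a * v (q a) = ∑ a, s (q a) * v a := by
    rw [← Equiv.sum_comp (hq.toPerm q) fun a => s (q a) * v a]
    simp only [Function.Involutive.coe_toPerm, hq _]
  simp only [mul_sub, sum_sub_distrib, hreindex, hs, neg_mul, sum_neg_distrib]
  ring

namespace IsNC2

variable {k : ℕ} {p q : Fin k → Fin k}

theorem involutive (hp : IsNC2 p) : Function.Involutive p := hp.1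

theorem apply_ne (hp : IsNC2 p) (l : Fin k) : p l ≠ l := hp.2.1 l

theorem not_crossing (hp : IsNC2 p) {a c : Fin k} (hac : a < c) (hc : c < p a) : ¬p a < p c :=
  hp.2.2 a c hac hc

theorem apply_mem_Ioo (hp : IsNC2 p) {a x : Fin k} (hx : x ∈ Set.Ioo a (p a)) :
    p x ∈ Set.Ioo a (p a) := by
  obtain ⟨hax, hxpa⟩ := hx
  constructor
  · refine lt_of_le_of_ne (not_lt.mp fun h => hp.not_crossing h ?_ ?_) fun h => ?_
    · rwa [hp.involutive x]
    · rwa [hp.involutive x]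
    · exact hxpa.ne (by rw [h, hp.involutive x])
  · exact lt_of_le_of_ne (not_lt.mp (hp.not_crossing hax hxpa)) fun h =>
      hax.ne' (hp.involutive.injective h)

theorem val_apply_mod_two_ne (hp : IsNC2 p) (l : Fin k) : (p l).val % 2 ≠ l.val % 2 := by
  wlog hl : l < p l generalizing l
  · have h := this (p l) (by rw [hp.involutive l]; exact (not_lt.mp hl).lt_of_ne (hp.apply_ne l))
    rw [hp.involutive l] at h
    exact h.symm
  have heven : Even #(Ioo l (p l)) :=
    even_card_of_involution p (fun x hx => by simpa using hp.apply_mem_Ioo (by simpa using hx))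
      (fun x _ => hp.involutive x) (fun x _ => hp.apply_ne x)
  rw [Fin.card_Ioo] at heven
  have hlt : l.val < (p l).val := hl
  obtain ⟨m, hm⟩ := heven
  omega

theorem exists_max_lt_of_apply_lt (hp : IsNC2 p) (hq : IsNC2 q)
    (hopen : ∀ l, l < p l ↔ l < q l) {a : Fin k} (ha : a < p a) (hlt : p a < q a) :
    ∃ d, d < p d ∧ p d ≠ q d ∧ max (p d) (q d) < max (p a) (q a) := by
  -- `p a` is a closer of `q` too; non-crossing of `q` puts its `q`-partner `d` inside `(a, p a)`.
  set d := q (p a)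
  have hqd : q d = p a := hq.involutive _
  have hdpa : d < p a := by
    refine lt_of_le_of_ne (not_lt.mp fun h => ?_) (hq.apply_ne (p a))
    rw [← hopen, hp.involutive] at h
    exact h.not_gt ha
  have had : a < d := by
    rcases lt_trichotomy a d with h | h | h
    · exact h
    · rw [← h] at hqd
      exact absurd hqd hlt.ne'
    · exact (hq.not_crossing h (hqd ▸ ha) (hqd ▸ hlt)).elim
  obtain ⟨-, hpd⟩ := hp.apply_mem_Ioo ⟨had, hdpa⟩
  refine ⟨d, (hopen d).mpr (hqd ▸ hdpa), hqd ▸ hpd.ne, ?_⟩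
  rwa [hqd, max_eq_right hpd.le, max_eq_right hlt.le]

theorem eq_of_lt_iff_lt (hp : IsNC2 p) (hq : IsNC2 q) (hopen : ∀ l, l < p l ↔ l < q l) :
    p = q := by
  have hopeners : ∀ a, a < p a → p a = q a := by
    intro a
    refine (InvImage.wf (fun a => max (p a) (q a)) wellFounded_lt).induction
      (C := fun a => a < p a → p a = q a) a ?_
    intro a ih ha
    by_contra hne
    rcases lt_or_gt_of_ne hne with h | h
    · obtain ⟨d, hd, hned, hlt⟩ := exists_max_lt_of_apply_lt hp hq hopen ha h
      exact hned (ih d hlt hd)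
    · obtain ⟨d, hd, hned, hlt⟩ :=
        exists_max_lt_of_apply_lt hq hp (fun l => (hopen l).symm) ((hopen a).mp ha) h
      rw [max_comm (q d), max_comm (q a)] at hlt
      exact hned (ih d hlt ((hopen d).mpr hd)).symm
  funext l
  rcases lt_or_gt_of_ne (hp.apply_ne l) with h | h
  · have h' := hopeners (p l) (by rwa [hp.involutive l])
    rw [hp.involutive l] at h'
    exact ((congrArg q h').trans (hq.involutive _)).symm
  · exact hopeners l h

end IsNC2

section Displacement

variable {k : ℕ}

def parityColoring (p : Fin k → Fin k) (l : Fin k) : Fin 2 :=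
  ⟨(l.val + if l < p l then 1 else 0) % 2, Nat.mod_lt _ two_pos⟩

def openerSign (p : Fin k → Fin k) (l : Fin k) : ℤ := if l < p l then 1 else -1

def totalDisplacement (q : Fin k → Fin k) : ℤ := ∑ l, |((q l : ℕ) : ℤ) - l|

theorem parityColoring_apply_eq_iff {p q : Fin k → Fin k} (hq : IsNC2 q) (l : Fin k) :
    parityColoring p (q l) = parityColoring p l ↔ openerSign p (q l) = -openerSign p l := by
  have hodd := hq.val_apply_mod_two_ne l
  simp only [parityColoring, openerSign, Fin.ext_iff]
  split_ifs <;> norm_num <;> omega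

theorem IsNC2.openerSign_apply {p : Fin k → Fin k} (hp : IsNC2 p) (l : Fin k) :
    openerSign p (p l) = -openerSign p l := by
  rcases lt_or_gt_of_ne (hp.apply_ne l) with h | h <;>
    simp [openerSign, hp.involutive l, h, h.not_gt]

theorem openerSign_mul_le_abs (p : Fin k → Fin k) (l : Fin k) (x : ℤ) :
    openerSign p l * x ≤ |x| := by
  unfold openerSign
  split_ifs
  · simpa using le_abs_self x
  · simpa using neg_le_abs x

theorem openerSign_mul_sub_eq_abs_iff {p : Fin k → Fin k} {l m : Fin k} (hm : m ≠ l) :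
    openerSign p l * (((m : ℕ) : ℤ) - l) = |((m : ℕ) : ℤ) - l| ↔ (l < p l ↔ l < m) := by
  have hval : (m : ℕ) ≠ l := Fin.val_ne_of_ne hm
  simp only [openerSign, Fin.lt_def]
  split_ifs <;> rcases abs_cases (((m : ℕ) : ℤ) - l) with ⟨h₁, h₂⟩ | ⟨h₁, h₂⟩ <;> omega

theorem IsNC2.totalDisplacement_eq {p : Fin k → Fin k} (hp : IsNC2 p) :
    totalDisplacement p = -2 * ∑ l, openerSign p l * (l : ℤ) := by
  rw [← hp.involutive.sum_mul_sub_eq_neg_two_mul_sum hp.openerSign_apply]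
  exact sum_congr rfl fun l _ => ((openerSign_mul_sub_eq_abs_iff (hp.apply_ne l)).mpr Iff.rfl).symm

theorem IsNC2.totalDisplacement_lt {p q : Fin k → Fin k} (hp : IsNC2 p) (hq : IsNC2 q)
    (hswap : ∀ l, openerSign p (q l) = -openerSign p l) (hne : q ≠ p) :
    totalDisplacement p < totalDisplacement q := by
  have hsigned : ∑ l, openerSign p l * (((q l : ℕ) : ℤ) - l) = totalDisplacement p := by
    rw [hp.totalDisplacement_eq]
    exact hq.involutive.sum_mul_sub_eq_neg_two_mul_sum (v := fun l => ((l : ℕ) : ℤ)) hswap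
  have hle : ∀ l ∈ univ, openerSign p l * (((q l : ℕ) : ℤ) - l) ≤ |((q l : ℕ) : ℤ) - l| :=
    fun l _ => openerSign_mul_le_abs p l _
  rw [← hsigned]
  refine lt_of_le_of_ne (sum_le_sum hle) fun heq => hne ?_
  have htight := (sum_eq_sum_iff_of_le hle).mp heq
  exact (hp.eq_of_lt_iff_lt hq fun l =>
    (openerSign_mul_sub_eq_abs_iff (hq.apply_ne l)).mp (htight l (mem_univ l))).symm

end Displacement

theorem Tvec_ne_zero_iff {k N : ℕ} {q : Fin k → Fin k} {i : Fin k → Fin N} :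
    Tvec q i ≠ 0 ↔ ∀ l, i (q l) = i l := by
  unfold Tvec
  split_ifs with h <;> simp [h]

theorem Tvec_comp_of_injective {k M N : ℕ} {e : Fin M → Fin N} (he : Function.Injective e)
    (q : Fin k → Fin k) (i : Fin k → Fin M) : Tvec q (e ∘ i) = Tvec q i := by
  simp [Tvec, he.eq_iff]

theorem nc2_vectors_linearIndependent_general (N k : ℕ) (hN : 2 ≤ N) :
    LinearIndependent ℂ (fun p : { p : Fin k → Fin k // IsNC2 p } =>
      (Tvec p.1 : (Fin k → Fin N) → ℂ)) := by
  let testTuple (p : { p : Fin k → Fin k // IsNC2 p }) := Fin.castLE hN ∘ parityColoring p.1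
  have htest : ∀ p q : { p : Fin k → Fin k // IsNC2 p }, Tvec q.1 (testTuple p) ≠ 0 ↔
      ∀ l, openerSign p.1 (q.1 l) = -openerSign p.1 l := fun p q => by
    rw [Tvec_comp_of_injective (Fin.castLE_injective hN), Tvec_ne_zero_iff]
    exact forall_congr' (parityColoring_apply_eq_iff q.2)
  refine linearIndependent_of_triangular_eval _ testTuple (fun p => totalDisplacement p.1)
    (fun p => (htest p p).mpr p.2.openerSign_apply) fun p q hpq => ?_
  by_cases h : q = p
  · exact Or.inl h
  · exact Or.inr (p.2.totalDisplacement_lt q.2 ((htest p q).mp hpq) (Subtype.coe_ne_coe.mpr h))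

theorem nc2_vectors_linearIndependent (N k : ℕ) (hN : 2 ≤ N) (hk : Even k) :
    LinearIndependent ℂ (fun p : { p : Fin k → Fin k // IsNC2 p } =>
      (Tvec p.1 : (Fin k → Fin N) → ℂ)) :=
  nc2_vectors_linearIndependent_general N k hN
end

section
/- Let $N \ge 3$. If $\xi_1, \xi_2 \in S^{N-1}$ are linearly independent unit vectors, then the subgroup of $O_N$ generated by $\mathrm{Stab}(\xi_1) = \{g \in O_N : g\xi_1 = \xi_1\}$ and $\mathrm{Stab}(\xi_2)$ is all of $O_N$. -/
open Matrix

/-- The stabilizer of a vector `ξ ∈ ℝ^N` inside the orthogonal group `O_N`,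
as a set of orthogonal matrices. -/
def vecStabilizer {N : ℕ} (ξ : Fin N → ℝ) : Set (Matrix.orthogonalGroup (Fin N) ℝ) :=
  {g | (g : Matrix (Fin N) (Fin N) ℝ).mulVec ξ = ξ}

namespace StabGen

open Real InnerProductSpace

/-- Spherical triangle compatibility: if `γ` is within the angle conditions relative
to `α` and `θ`, then the Gram determinant condition holds for the cosines. -/
lemma compat_cos (θ α γ : ℝ) (hγ0 : 0 ≤ γ) (hγπ : γ ≤ π)
    (h1 : γ ≤ α + θ) (h2 : α ≤ γ + θ) (h3 : θ ≤ α + γ) (h4 : α + γ ≤ 2 * π - θ) :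
    cos α ^ 2 + cos γ ^ 2 + cos θ ^ 2 - 2 * cos α * cos γ * cos θ ≤ 1 := by
  have e1 := Real.cos_sub α θ
  have e2 := Real.cos_add α θ
  have hu1 : cos γ ≤ cos (α - θ) := by
    rcases le_or_gt θ α with h | h
    · exact Real.cos_le_cos_of_nonneg_of_le_pi (by linarith) hγπ (by linarith)
    · rw [show α - θ = -(θ - α) by ring, Real.cos_neg]
      exact Real.cos_le_cos_of_nonneg_of_le_pi (by linarith) hγπ (by linarith)
  have hu2 : cos (α + θ) ≤ cos γ := by
    rcases le_or_gt (α + θ) π with h | h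
    · exact Real.cos_le_cos_of_nonneg_of_le_pi hγ0 h h1
    · rw [show α + θ = 2 * π - (2 * π - (α + θ)) by ring, Real.cos_two_pi_sub]
      exact Real.cos_le_cos_of_nonneg_of_le_pi hγ0 (by linarith) (by linarith)
  have key : 0 ≤ (cos (α - θ) - cos γ) * (cos γ - cos (α + θ)) :=
    mul_nonneg (by linarith) (by linarith)
  rw [e1, e2] at key
  have s1 := Real.sin_sq_add_cos_sq α
  have s2 := Real.sin_sq_add_cos_sq θ
  nlinarith [key, s1, s2]

/-- Abstract reachability lemma (case `0 ≤ c < 1`). -/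
lemma reach_aux (c : ℝ) (hc0 : 0 ≤ c) (hc1 : c < 1) (A : Set ℝ) (h1 : (1:ℝ) ∈ A)
    (hstep : ∀ a t b : ℝ, a ∈ A → a^2 + t^2 + c^2 - 2*a*t*c ≤ 1 →
      t^2 + b^2 + c^2 - 2*t*b*c ≤ 1 → b ∈ A) :
    ∀ b : ℝ, -1 ≤ b → b ≤ 1 → b ∈ A := by
  have hc1' : (-1:ℝ) ≤ c := by linarith
  set θ := Real.arccos c with hθdef
  have hθ0 : 0 < θ := Real.arccos_pos.2 hc1
  have hθπ : θ ≤ π := Real.arccos_le_pi c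
  have hθ2 : θ ≤ π / 2 := by
    rw [hθdef, Real.arccos_eq_pi_div_two_sub_arcsin]
    have := Real.arcsin_nonneg.2 hc0
    linarith
  have hcos : Real.cos θ = c := Real.cos_arccos hc1' hc1.le
  have hπ := Real.pi_pos
  have key : ∀ k : ℕ, ∀ β : ℝ, 0 ≤ β → β ≤ π → β ≤ k * θ → Real.cos β ∈ A := by
    intro k
    induction k with
    | zero =>
      intro β hβ0 _ hβk
      have hβ : β = 0 := le_antisymm (by simpa using hβk) hβ0
      rw [hβ, Real.cos_zero]; exact h1
    | succ k ih =>
      intro β hβ0 hβπ hβk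
      rcases le_or_gt β ((k:ℝ) * θ) with h | h
      · exact ih β hβ0 hβπ h
      · set α := (k:ℝ) * θ with hαdef
        have hα0 : 0 ≤ α := by positivity
        have hαπ : α ≤ π := le_trans h.le hβπ
        have haA : Real.cos α ∈ A := ih α hα0 hαπ le_rfl
        have hβα : β ≤ α + θ := by push_cast at hβk; linarith
        set γ := max (β - θ) (max (θ - α) 0) with hγdef
        have hγ0 : (0:ℝ) ≤ γ := le_max_of_le_right (le_max_right _ _)
        have hγ1 : β - θ ≤ γ := le_max_left _ _
        have hγ2 : θ - α ≤ γ := le_max_of_le_right (le_max_left _ _)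
        have hγπ : γ ≤ π := max_le (by linarith) (max_le (by linarith) (by linarith))
        have hγu1 : γ ≤ α + θ := max_le (by linarith) (max_le (by linarith) (by linarith))
        have hγu2 : γ ≤ 2*π - θ - α := max_le (by linarith) (max_le (by linarith) (by linarith))
        have hγu3 : γ ≤ 2*π - θ - β := max_le (by linarith) (max_le (by linarith) (by linarith))
        have c1 := compat_cos θ α γ hγ0 hγπ (by linarith) (by linarith) (by linarith) (by linarith)
        have c2 := compat_cos θ γ β hβ0 hβπ (by linarith) (by linarith) (by linarith) (by linarith)
        rw [hcos] at c1 c2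
        exact hstep _ _ _ haA c1 c2
  intro b hb1 hb2
  obtain ⟨k, hk⟩ := exists_nat_ge (π / θ)
  have hπk : π ≤ (k:ℝ) * θ := by
    rw [div_le_iff₀ hθ0] at hk; linarith
  have := key k (Real.arccos b) (Real.arccos_nonneg b) (Real.arccos_le_pi b)
    (le_trans (Real.arccos_le_pi b) hπk)
  rwa [Real.cos_arccos hb1 hb2] at this

/-- Abstract reachability lemma, general `c` with `c² < 1`. -/
lemma reach (c : ℝ) (hc : c^2 < 1) (A : Set ℝ) (h1 : (1:ℝ) ∈ A)
    (hstep : ∀ a t b : ℝ, a ∈ A → a^2 + t^2 + c^2 - 2*a*t*c ≤ 1 →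
      t^2 + b^2 + c^2 - 2*t*b*c ≤ 1 → b ∈ A) :
    ∀ b : ℝ, -1 ≤ b → b ≤ 1 → b ∈ A := by
  rcases le_or_gt 0 c with h | h
  · exact reach_aux c h (by nlinarith) A h1 hstep
  · refine reach_aux (-c) (by linarith) (by nlinarith) A h1 ?_
    intro a t b ha hx1 hx2
    refine hstep a (-t) b ha ?_ ?_
    · rw [show a^2 + (-t)^2 + c^2 - 2*a*(-t)*c = a^2 + t^2 + (-c)^2 - 2*a*t*(-c) by ring]
      exact hx1
    · rw [show (-t)^2 + b^2 + c^2 - 2*(-t)*b*c = t^2 + b^2 + (-c)^2 - 2*t*b*(-c) by ring]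
      exact hx2

/-- Real inner product on Euclidean space as a sum. -/
lemma inner_eq {N : ℕ} (x y : EuclideanSpace ℝ (Fin N)) :
    ⟪x, y⟫_ℝ = ∑ i, x i * y i := by
  simp [PiLp.inner_apply, RCLike.inner_apply, mul_comm]

/-- Every linear isometry of Euclidean space comes from an orthogonal matrix. -/
lemma exists_group_elt {N : ℕ} (f : EuclideanSpace ℝ (Fin N) ≃ₗᵢ[ℝ] EuclideanSpace ℝ (Fin N)) :
    ∃ g : Matrix.orthogonalGroup (Fin N) ℝ,
      ∀ x : EuclideanSpace ℝ (Fin N), (g : Matrix (Fin N) (Fin N) ℝ).mulVec x = f x := by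
  classical
  set b := (EuclideanSpace.basisFun (Fin N) ℝ).toBasis with hbdef
  set A := LinearMap.toMatrix b b (f.toLinearEquiv : EuclideanSpace ℝ (Fin N) →ₗ[ℝ] EuclideanSpace ℝ (Fin N)) with hA
  have hrepr : ∀ x : EuclideanSpace ℝ (Fin N), ⇑(b.repr x) = (x : Fin N → ℝ) := by
    intro x
    funext i
    rw [hbdef, OrthonormalBasis.coe_toBasis_repr_apply, EuclideanSpace.basisFun_repr]
  have hmul : ∀ x : EuclideanSpace ℝ (Fin N), A.mulVec x = f x := by
    intro x
    have h := LinearMap.toMatrix_mulVec_repr b b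
      (f.toLinearEquiv : EuclideanSpace ℝ (Fin N) →ₗ[ℝ] EuclideanSpace ℝ (Fin N)) x
    simp only [hrepr] at h
    exact h
  have hent : ∀ i j, A i j = f (EuclideanSpace.single j 1) i := by
    intro i j
    rw [hA, LinearMap.toMatrix_apply, hbdef, OrthonormalBasis.coe_toBasis_repr_apply,
      EuclideanSpace.basisFun_repr, OrthonormalBasis.coe_toBasis, EuclideanSpace.basisFun_apply]
    rfl
  have hmem : A ∈ Matrix.orthogonalGroup (Fin N) ℝ := by
    rw [Matrix.mem_orthogonalGroup_iff']
    ext i j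
    have hsA : (Aᵀ * A) i j = ∑ k, A k i * A k j := by
      simp [Matrix.mul_apply]
    rw [hsA]
    have h1 : ∑ k, A k i * A k j
        = ⟪f (EuclideanSpace.single i 1), f (EuclideanSpace.single j 1)⟫_ℝ := by
      rw [inner_eq]
      refine Finset.sum_congr rfl fun k _ => ?_
      rw [hent k i, hent k j]
    rw [h1, f.inner_map_map, inner_eq]
    by_cases hij : i = j
    · subst hij
      simp [EuclideanSpace.single_apply, Matrix.one_apply]
    · simp [EuclideanSpace.single_apply, Matrix.one_apply, hij, Ne.symm hij]
  exact ⟨⟨A, hmem⟩, hmul⟩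

/-- The identity map from plain functions to Euclidean space. -/
noncomputable def toE {N : ℕ} (x : Fin N → ℝ) : EuclideanSpace ℝ (Fin N) :=
  (WithLp.equiv 2 (Fin N → ℝ)).symm x

lemma inner_toE {N : ℕ} (x y : Fin N → ℝ) :
    ⟪toE x, toE y⟫_ℝ = ∑ i, x i * y i := inner_eq _ _

lemma trans_basis_apply {N : ℕ} (b b' : OrthonormalBasis (Fin N) ℝ (EuclideanSpace ℝ (Fin N)))
    (i : Fin N) : (b.repr.trans b'.repr.symm) (b i) = b' i := by
  simp only [LinearIsometryEquiv.trans_apply]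
  rw [OrthonormalBasis.repr_self, OrthonormalBasis.repr_symm_single]

/-- Orthogonal matrices preserve the inner product. -/
lemma mulVec_inner {N : ℕ} (g : Matrix.orthogonalGroup (Fin N) ℝ) (x y : Fin N → ℝ) :
    ⟪toE ((g : Matrix (Fin N) (Fin N) ℝ).mulVec x),
      toE ((g : Matrix (Fin N) (Fin N) ℝ).mulVec y)⟫_ℝ = ⟪toE x, toE y⟫_ℝ := by
  rw [inner_toE, inner_toE]
  show ((g : Matrix (Fin N) (Fin N) ℝ).mulVec x) ⬝ᵥ ((g : Matrix (Fin N) (Fin N) ℝ).mulVec y)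
    = x ⬝ᵥ y
  rw [Matrix.dotProduct_mulVec]
  have hvm : ((g : Matrix (Fin N) (Fin N) ℝ).mulVec x) ᵥ* (g : Matrix (Fin N) (Fin N) ℝ)
      = ((star (g : Matrix (Fin N) (Fin N) ℝ) * (g : Matrix (Fin N) (Fin N) ℝ)).mulVec x) := by
    rw [← Matrix.mulVec_mulVec, ← Matrix.mulVec_transpose]
    congr 1
  rw [hvm, Matrix.UnitaryGroup.star_mul_self g, Matrix.one_mulVec]

set_option maxHeartbeats 2000000 in
/-- Transitivity of the stabilizer of a unit vector on "latitude spheres". -/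
lemma stab_trans {N : ℕ} (hN : 2 ≤ N) (ξ x y : EuclideanSpace ℝ (Fin N))
    (hξ : ⟪ξ, ξ⟫_ℝ = 1) (hx : ⟪x, x⟫_ℝ = 1) (hy : ⟪y, y⟫_ℝ = 1)
    (hxy : ⟪x, ξ⟫_ℝ = ⟪y, ξ⟫_ℝ) :
    ∃ g : Matrix.orthogonalGroup (Fin N) ℝ,
      (g : Matrix (Fin N) (Fin N) ℝ).mulVec ξ = ξ ∧
      (g : Matrix (Fin N) (Fin N) ℝ).mulVec x = y := by
  classical
  set t := ⟪x, ξ⟫_ℝ with ht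
  set x' : EuclideanSpace ℝ (Fin N) := x - t • ξ with hx'def
  set y' : EuclideanSpace ℝ (Fin N) := y - t • ξ with hy'def
  have hx'ξ : ⟪x', ξ⟫_ℝ = 0 := by
    simp only [hx'def, inner_sub_left, real_inner_smul_left]
    rw [hξ, ← ht]; ring
  have hy'ξ : ⟪y', ξ⟫_ℝ = 0 := by
    simp only [hy'def, inner_sub_left, real_inner_smul_left]
    rw [hξ, ← hxy]; ring
  have hx'x' : ⟪x', x'⟫_ℝ = 1 - t^2 := by
    simp only [hx'def, inner_sub_left, inner_sub_right, real_inner_smul_left,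
      real_inner_smul_right]
    rw [hx, hξ, real_inner_comm x ξ, ← ht]; ring
  have hy'y' : ⟪y', y'⟫_ℝ = 1 - t^2 := by
    simp only [hy'def, inner_sub_left, inner_sub_right, real_inner_smul_left,
      real_inner_smul_right]
    rw [hy, hξ, real_inner_comm y ξ, ← hxy]; ring
  have hts : 0 ≤ 1 - t^2 := by rw [← hx'x']; exact real_inner_self_nonneg
  rcases eq_or_lt_of_le hts with h0 | h0
  · have hx'0 : x' = 0 := inner_self_eq_zero.mp (by rw [hx'x']; linarith)
    have hy'0 : y' = 0 := inner_self_eq_zero.mp (by rw [hy'y']; linarith)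
    rw [hx'def, sub_eq_zero] at hx'0
    rw [hy'def, sub_eq_zero] at hy'0
    have hxyeq : x = y := by rw [hx'0, hy'0]
    refine ⟨1, ?_, ?_⟩
    · show ((1 : Matrix.orthogonalGroup (Fin N) ℝ) : Matrix (Fin N) (Fin N) ℝ).mulVec ξ = ξ
      rw [show ((1 : Matrix.orthogonalGroup (Fin N) ℝ) : Matrix (Fin N) (Fin N) ℝ) = 1 from rfl,
        Matrix.one_mulVec]
    · show ((1 : Matrix.orthogonalGroup (Fin N) ℝ) : Matrix (Fin N) (Fin N) ℝ).mulVec x = y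
      rw [show ((1 : Matrix.orthogonalGroup (Fin N) ℝ) : Matrix (Fin N) (Fin N) ℝ) = 1 from rfl,
        Matrix.one_mulVec]
      rw [hxyeq]
  · set r := Real.sqrt (1 - t^2) with hr
    have hr0 : 0 < r := Real.sqrt_pos.2 h0
    have hr2 : r^2 = 1 - t^2 := Real.sq_sqrt h0.le
    have hrne : r ≠ 0 := hr0.ne'
    set u : EuclideanSpace ℝ (Fin N) := r⁻¹ • x' with hu
    set v : EuclideanSpace ℝ (Fin N) := r⁻¹ • y' with hv
    have huξ : ⟪ξ, u⟫_ℝ = 0 := by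
      simp only [hu, real_inner_smul_right]
      rw [real_inner_comm, hx'ξ]; ring
    have hvξ : ⟪ξ, v⟫_ℝ = 0 := by
      simp only [hv, real_inner_smul_right]
      rw [real_inner_comm, hy'ξ]; ring
    have huu : ⟪u, u⟫_ℝ = 1 := by
      simp only [hu, real_inner_smul_left, real_inner_smul_right]
      rw [hx'x']
      field_simp
      nlinarith [hr2]
    have hvv : ⟪v, v⟫_ℝ = 1 := by
      simp only [hv, real_inner_smul_left, real_inner_smul_right]
      rw [hy'y']
      field_simp
      nlinarith [hr2]
    set i0 : Fin N := ⟨0, by omega⟩ with hi0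
    set i1 : Fin N := ⟨1, by omega⟩ with hi1
    have hi01 : i0 ≠ i1 := by
      simp [hi0, hi1, Fin.ext_iff]
    have hcard : Module.finrank ℝ (EuclideanSpace ℝ (Fin N)) = Fintype.card (Fin N) := by
      simp [finrank_euclideanSpace]
    have hbuild : ∀ z : EuclideanSpace ℝ (Fin N), ⟪ξ, z⟫_ℝ = 0 → ⟪z, z⟫_ℝ = 1 →
        ∃ b : OrthonormalBasis (Fin N) ℝ (EuclideanSpace ℝ (Fin N)), b i0 = ξ ∧ b i1 = z := by
      intro z hzξ hzz
      have hzξ' : ⟪z, ξ⟫_ℝ = 0 := by rw [real_inner_comm]; exact hzξ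
      have hortho : Orthonormal ℝ (({i0, i1} : Set (Fin N)).restrict
          (fun j => if j = i0 then ξ else z)) := by
        rw [orthonormal_iff_ite]
        rintro ⟨i, hi⟩ ⟨j, hj⟩
        simp only [Set.mem_insert_iff, Set.mem_singleton_iff] at hi hj
        simp only [Set.restrict_apply, Subtype.mk.injEq]
        rcases hi with rfl | rfl <;> rcases hj with rfl | rfl
        · simpa [Set.restrict] using hξ
        · simp [hi01, Ne.symm hi01, Set.restrict, hzξ]
        · simp [hi01, Ne.symm hi01, Set.restrict, hzξ']
        · simpa [hi01, Ne.symm hi01, Set.restrict] using hzz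
      obtain ⟨b, hb⟩ := hortho.exists_orthonormalBasis_extension_of_card_eq hcard
      refine ⟨b, ?_, ?_⟩
      · have := hb i0 (by simp); simpa using this
      · have := hb i1 (by simp); simpa [hi01, Ne.symm hi01] using this
    obtain ⟨b, hb0, hb1⟩ := hbuild u huξ huu
    obtain ⟨b', hb'0, hb'1⟩ := hbuild v hvξ hvv
    have hxdec : x = t • ξ + r • u := by
      rw [hu, smul_smul, mul_inv_cancel₀ hrne, one_smul, hx'def]
      abel
    have hydec : y = t • ξ + r • v := by
      rw [hv, smul_smul, mul_inv_cancel₀ hrne, one_smul, hy'def]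
      abel
    clear_value u v
    clear_value x' y'
    clear_value r
    clear_value t
    have hfξ : (b.repr.trans b'.repr.symm) ξ = ξ := by
      have := trans_basis_apply b b' i0; rwa [hb0, hb'0] at this
    have hfu : (b.repr.trans b'.repr.symm) u = v := by
      have := trans_basis_apply b b' i1; rwa [hb1, hb'1] at this
    have hfx : (b.repr.trans b'.repr.symm) x = y := by
      rw [hxdec, map_add, _root_.map_smul, _root_.map_smul, hfξ, hfu, hydec]
    obtain ⟨g, hg⟩ := exists_group_elt (b.repr.trans b'.repr.symm)
    exact ⟨g, by rw [hg ξ, hfξ], by rw [hg x, hfx]⟩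

set_option maxHeartbeats 2000000 in
/-- Existence of a unit vector with two prescribed inner products. -/
lemma exists_vec {N : ℕ} (hN : 3 ≤ N) (ξ₁ ξ₂ : EuclideanSpace ℝ (Fin N))
    (h1 : ⟪ξ₁, ξ₁⟫_ℝ = 1) (h2 : ⟪ξ₂, ξ₂⟫_ℝ = 1)
    (a t : ℝ) (hc2 : ⟪ξ₁, ξ₂⟫_ℝ ^ 2 < 1)
    (hcompat : a^2 + t^2 + ⟪ξ₁, ξ₂⟫_ℝ^2 - 2*a*t*⟪ξ₁, ξ₂⟫_ℝ ≤ 1) :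
    ∃ x : EuclideanSpace ℝ (Fin N), ⟪x, x⟫_ℝ = 1 ∧ ⟪x, ξ₁⟫_ℝ = a ∧ ⟪x, ξ₂⟫_ℝ = t := by
  classical
  set c := ⟪ξ₁, ξ₂⟫_ℝ with hc
  have h1c : (0:ℝ) < 1 - c^2 := by nlinarith
  set s := Real.sqrt (1 - c^2) with hs
  have hs0 : 0 < s := Real.sqrt_pos.2 h1c
  have hs2 : s^2 = 1 - c^2 := Real.sq_sqrt h1c.le
  have hsne : s ≠ 0 := hs0.ne'
  set e₂ : EuclideanSpace ℝ (Fin N) := s⁻¹ • (ξ₂ - c • ξ₁) with he₂def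
  have he2ξ1 : ⟪ξ₁, e₂⟫_ℝ = 0 := by
    simp only [he₂def, real_inner_smul_right, inner_sub_right]
    rw [h1, ← hc]; ring
  have he2ξ1' : ⟪e₂, ξ₁⟫_ℝ = 0 := by rw [real_inner_comm]; exact he2ξ1
  have he2e2 : ⟪e₂, e₂⟫_ℝ = 1 := by
    simp only [he₂def, real_inner_smul_left, real_inner_smul_right, inner_sub_left,
      inner_sub_right]
    rw [h1, h2, real_inner_comm ξ₁ ξ₂, ← hc]
    field_simp
    nlinarith [hs2]
  set i0 : Fin N := ⟨0, by omega⟩ with hi0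
  set i1 : Fin N := ⟨1, by omega⟩ with hi1
  set i2 : Fin N := ⟨2, by omega⟩ with hi2
  have hi01 : i0 ≠ i1 := by simp [hi0, hi1, Fin.ext_iff]
  have hi02 : i0 ≠ i2 := by simp [hi0, hi2, Fin.ext_iff]
  have hi12 : i1 ≠ i2 := by simp [hi1, hi2, Fin.ext_iff]
  have hcard : Module.finrank ℝ (EuclideanSpace ℝ (Fin N)) = Fintype.card (Fin N) := by
    simp [finrank_euclideanSpace]
  have hortho : Orthonormal ℝ (({i0, i1} : Set (Fin N)).restrict
      (fun j => if j = i0 then ξ₁ else e₂)) := by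
    rw [orthonormal_iff_ite]
    rintro ⟨i, hi⟩ ⟨j, hj⟩
    simp only [Set.mem_insert_iff, Set.mem_singleton_iff] at hi hj
    simp only [Set.restrict_apply, Subtype.mk.injEq]
    rcases hi with rfl | rfl <;> rcases hj with rfl | rfl
    · simpa [Set.restrict] using h1
    · simp [hi01, Ne.symm hi01, Set.restrict, he2ξ1]
    · simp [hi01, Ne.symm hi01, Set.restrict, he2ξ1']
    · simpa [hi01, Ne.symm hi01, Set.restrict] using he2e2
  obtain ⟨b, hb⟩ := hortho.exists_orthonormalBasis_extension_of_card_eq hcard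
  have hb0 : b i0 = ξ₁ := by have := hb i0 (by simp); simpa using this
  have hb1 : b i1 = e₂ := by have := hb i1 (by simp); simpa [hi01, Ne.symm hi01] using this
  have hbo := b.orthonormal
  rw [orthonormal_iff_ite] at hbo
  have he3e3 : ⟪b i2, b i2⟫_ℝ = 1 := by have := hbo i2 i2; simpa using this
  have hξ1e3 : ⟪ξ₁, b i2⟫_ℝ = 0 := by
    have := hbo i0 i2; rw [hb0] at this; simpa [hi02] using this
  have he3ξ1 : ⟪b i2, ξ₁⟫_ℝ = 0 := by rw [real_inner_comm]; exact hξ1e3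
  have he2e3 : ⟪e₂, b i2⟫_ℝ = 0 := by
    have := hbo i1 i2; rw [hb1] at this; simpa [hi12] using this
  have he3e2 : ⟪b i2, e₂⟫_ℝ = 0 := by rw [real_inner_comm]; exact he2e3
  set β := (t - a*c)/s with hβdef
  have hkey : (t - a*c)^2 ≤ (1-a^2)*(1-c^2) := by nlinarith
  have hβ2 : β^2 * (1 - c^2) = (t - a*c)^2 := by
    rw [hβdef, div_pow, hs2]
    field_simp
  have hβle : β^2 ≤ 1 - a^2 := by nlinarith [hβ2, hkey, h1c]
  have hγnn : 0 ≤ 1 - a^2 - β^2 := by linarith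
  set γ := Real.sqrt (1 - a^2 - β^2) with hγdef
  have hγ2 : γ^2 = 1 - a^2 - β^2 := Real.sq_sqrt hγnn
  have hξ2dec : ξ₂ = c • ξ₁ + s • e₂ := by
    rw [he₂def, smul_smul, mul_inv_cancel₀ hsne, one_smul]
    abel
  clear_value γ
  clear_value β
  clear_value i0 i1 i2
  clear_value e₂
  clear_value s
  clear_value c
  refine ⟨a • ξ₁ + β • e₂ + γ • b i2, ?_, ?_, ?_⟩
  · simp only [inner_add_left, inner_add_right, real_inner_smul_left, real_inner_smul_right]
    rw [h1, he2e2, he3e3, he2ξ1, he2ξ1', hξ1e3, he3ξ1, he2e3, he3e2]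
    nlinarith [hγ2]
  · simp only [inner_add_left, real_inner_smul_left]
    rw [h1, he2ξ1', he3ξ1]
    ring
  · rw [hξ2dec]
    simp only [inner_add_left, inner_add_right, real_inner_smul_left, real_inner_smul_right]
    rw [h1, he2e2, he2ξ1, he2ξ1', he3ξ1, he3e2, hβdef]
    field_simp
    ring

end StabGen

open StabGen InnerProductSpace

set_option maxHeartbeats 2000000 in
theorem stabilizers_generate_orthogonalGroup (N : ℕ) (hN : 3 ≤ N)
    (ξ₁ ξ₂ : Fin N → ℝ) (h₁ : ∑ i, ξ₁ i ^ 2 = 1) (h₂ : ∑ i, ξ₂ i ^ 2 = 1)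
    (hind : LinearIndependent ℝ ![ξ₁, ξ₂]) :
    Subgroup.closure (vecStabilizer ξ₁ ∪ vecStabilizer ξ₂) = ⊤ := by
  classical
  set S := vecStabilizer ξ₁ ∪ vecStabilizer ξ₂ with hS
  set H := Subgroup.closure S with hH
  have hE : ∀ x : Fin N → ℝ, ∑ i, x i ^ 2 = 1 → ⟪toE x, toE x⟫_ℝ = 1 := by
    intro x hx
    rw [StabGen.inner_toE]
    simpa [pow_two] using hx
  have hn1 := hE ξ₁ h₁
  have hn2 := hE ξ₂ h₂
  have hnorm : ∀ x : EuclideanSpace ℝ (Fin N), ⟪x, x⟫_ℝ = 1 → ‖x‖ = 1 := by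
    intro x hx
    have h := real_inner_self_eq_norm_sq x
    rw [hx] at h
    have h0 : (‖x‖ - 1) * (‖x‖ + 1) = 0 := by nlinarith
    rcases mul_eq_zero.1 h0 with h' | h'
    · linarith
    · nlinarith [norm_nonneg x]
  set c : ℝ := ⟪toE ξ₁, toE ξ₂⟫_ℝ with hc
  have hpair := linearIndependent_fin2.mp hind
  have hne2 : ∀ r : ℝ, r • ξ₂ ≠ ξ₁ := by
    intro r
    have := hpair.2 r
    simpa using this
  have habs : |c| ≤ 1 := by
    have h := abs_real_inner_le_norm (toE ξ₁) (toE ξ₂)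
    rw [hnorm _ hn1, hnorm _ hn2, one_mul] at h
    rw [hc]
    exact h
  have hcne1 : c ≠ 1 := by
    intro h
    have hinner : ⟪toE ξ₁, toE ξ₂⟫_ℝ = 1 := by rw [← hc, h]
    have heq := (inner_eq_one_iff_of_norm_eq_one (𝕜 := ℝ) (hnorm _ hn1) (hnorm _ hn2)).1 hinner
    exact hne2 1 (by rw [one_smul]; exact congrArg WithLp.ofLp heq.symm)
  have hcnem1 : c ≠ -1 := by
    intro h
    have hinner : ⟪toE ξ₁, -toE ξ₂⟫_ℝ = 1 := by
      rw [inner_neg_right, ← hc, h]; norm_num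
    have hnm : ‖-toE ξ₂‖ = 1 := by rw [norm_neg]; exact hnorm _ hn2
    have heq := (inner_eq_one_iff_of_norm_eq_one (𝕜 := ℝ) (hnorm _ hn1) hnm).1 hinner
    exact hne2 (-1) (by rw [neg_one_smul]; exact congrArg WithLp.ofLp heq.symm)
  have hc2 : c^2 < 1 := by
    obtain ⟨hl, hr⟩ := abs_le.1 habs
    have hl' : -1 < c := lt_of_le_of_ne hl (fun h => hcnem1 h.symm)
    have hr' : c < 1 := lt_of_le_of_ne hr hcne1
    nlinarith
  set A : Set ℝ := {r | ∃ h : Matrix.orthogonalGroup (Fin N) ℝ, h ∈ H ∧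
    ⟪toE ((h : Matrix (Fin N) (Fin N) ℝ).mulVec ξ₁), toE ξ₁⟫_ℝ = r} with hA
  have coemul : ∀ p q : Matrix.orthogonalGroup (Fin N) ℝ,
      ((p * q : Matrix.orthogonalGroup (Fin N) ℝ) : Matrix (Fin N) (Fin N) ℝ)
        = (p : Matrix (Fin N) (Fin N) ℝ) * (q : Matrix (Fin N) (Fin N) ℝ) := fun p q => rfl
  have h1A : (1:ℝ) ∈ A := by
    rw [hA, Set.mem_setOf_eq]
    refine ⟨1, one_mem H, ?_⟩
    rw [show ((1 : Matrix.orthogonalGroup (Fin N) ℝ) : Matrix (Fin N) (Fin N) ℝ) = 1 from rfl,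
      Matrix.one_mulVec]
    exact hn1
  have hstep : ∀ a t b : ℝ, a ∈ A → a^2 + t^2 + c^2 - 2*a*t*c ≤ 1 →
      t^2 + b^2 + c^2 - 2*t*b*c ≤ 1 → b ∈ A := by
    rintro a t b haA hcc1 hcc2
    rw [hA, Set.mem_setOf_eq] at haA
    obtain ⟨h, hhH, hha⟩ := haA
    have hxunit : ⟪toE ((h : Matrix (Fin N) (Fin N) ℝ).mulVec ξ₁),
        toE ((h : Matrix (Fin N) (Fin N) ℝ).mulVec ξ₁)⟫_ℝ = 1 := by
      rw [StabGen.mulVec_inner h]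
      exact hn1
    obtain ⟨z, hz1, hza, hzt⟩ := StabGen.exists_vec hN (toE ξ₁) (toE ξ₂) hn1 hn2 a t
      (by rw [← hc]; exact hc2) (by rw [← hc]; exact hcc1)
    obtain ⟨g1, hg1ξ, hg1x⟩ := StabGen.stab_trans (by omega) (toE ξ₁)
      (toE ((h : Matrix (Fin N) (Fin N) ℝ).mulVec ξ₁)) z
      hn1 hxunit hz1 (by rw [hha, hza])
    have hg1stab : g1 ∈ vecStabilizer ξ₁ := hg1ξ
    have hg1H : g1 ∈ H := Subgroup.subset_closure (Set.mem_union_left _ hg1stab)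
    obtain ⟨y, hy1, hyt, hyb⟩ := StabGen.exists_vec hN (toE ξ₂) (toE ξ₁) hn2 hn1 t b
      (by rw [real_inner_comm, ← hc]; exact hc2)
      (by rw [real_inner_comm (toE ξ₁) (toE ξ₂), ← hc]; exact hcc2)
    obtain ⟨g2, hg2ξ, hg2z⟩ := StabGen.stab_trans (by omega) (toE ξ₂) z y hn2 hz1 hy1
      (by rw [hzt, hyt])
    have hg2stab : g2 ∈ vecStabilizer ξ₂ := hg2ξ
    have hg2H : g2 ∈ H := Subgroup.subset_closure (Set.mem_union_right _ hg2stab)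
    rw [hA, Set.mem_setOf_eq]
    refine ⟨g2 * (g1 * h), mul_mem hg2H (mul_mem hg1H hhH), ?_⟩
    have hg1x' : (g1 : Matrix (Fin N) (Fin N) ℝ).mulVec
        ((h : Matrix (Fin N) (Fin N) ℝ).mulVec ξ₁) = z := hg1x
    have hmv : (((g2 * (g1 * h)) : Matrix.orthogonalGroup (Fin N) ℝ) :
        Matrix (Fin N) (Fin N) ℝ).mulVec ξ₁ = y := by
      rw [coemul, ← Matrix.mulVec_mulVec, coemul, ← Matrix.mulVec_mulVec, hg1x']
      exact hg2z
    rw [hmv]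
    exact hyb
  have hAll := StabGen.reach c hc2 A h1A hstep
  rw [eq_top_iff]
  rintro g -
  have hgunit : ⟪toE ((g : Matrix (Fin N) (Fin N) ℝ).mulVec ξ₁),
      toE ((g : Matrix (Fin N) (Fin N) ℝ).mulVec ξ₁)⟫_ℝ = 1 := by
    rw [StabGen.mulVec_inner g]
    exact hn1
  set r : ℝ := ⟪toE ((g : Matrix (Fin N) (Fin N) ℝ).mulVec ξ₁), toE ξ₁⟫_ℝ with hrdef
  have hrA : r ∈ A := by
    have hcs := abs_real_inner_le_norm (toE ((g : Matrix (Fin N) (Fin N) ℝ).mulVec ξ₁)) (toE ξ₁)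
    rw [hnorm _ hgunit, hnorm _ hn1, one_mul, ← hrdef] at hcs
    obtain ⟨hl, hr⟩ := abs_le.1 hcs
    exact hAll r hl hr
  rw [hA, Set.mem_setOf_eq] at hrA
  obtain ⟨h, hhH, hhr⟩ := hrA
  have hhunit : ⟪toE ((h : Matrix (Fin N) (Fin N) ℝ).mulVec ξ₁),
      toE ((h : Matrix (Fin N) (Fin N) ℝ).mulVec ξ₁)⟫_ℝ = 1 := by
    rw [StabGen.mulVec_inner h]
    exact hn1
  obtain ⟨g3, hg3ξ, hg3x⟩ := StabGen.stab_trans (by omega) (toE ξ₁)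
    (toE ((h : Matrix (Fin N) (Fin N) ℝ).mulVec ξ₁))
    (toE ((g : Matrix (Fin N) (Fin N) ℝ).mulVec ξ₁))
    hn1 hhunit hgunit (by rw [hhr, hrdef])
  have hg3stab : g3 ∈ vecStabilizer ξ₁ := hg3ξ
  have hg3H : g3 ∈ H := Subgroup.subset_closure (Set.mem_union_left _ hg3stab)
  have hkH : g3 * h ∈ H := mul_mem hg3H hhH
  have hg3x' : (g3 : Matrix (Fin N) (Fin N) ℝ).mulVec
      ((h : Matrix (Fin N) (Fin N) ℝ).mulVec ξ₁) = (g : Matrix (Fin N) (Fin N) ℝ).mulVec ξ₁ :=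
    hg3x
  have hkξ : (((g3 * h) : Matrix.orthogonalGroup (Fin N) ℝ) :
      Matrix (Fin N) (Fin N) ℝ).mulVec ξ₁ = (g : Matrix (Fin N) (Fin N) ℝ).mulVec ξ₁ := by
    rw [coemul, ← Matrix.mulVec_mulVec]
    exact hg3x'
  have hstab : ((g3 * h)⁻¹ * g) ∈ vecStabilizer ξ₁ := by
    show ((((g3 * h)⁻¹ * g) : Matrix.orthogonalGroup (Fin N) ℝ) :
      Matrix (Fin N) (Fin N) ℝ).mulVec ξ₁ = ξ₁
    rw [coemul, ← Matrix.mulVec_mulVec, ← hkξ, Matrix.mulVec_mulVec, ← coemul,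
      inv_mul_cancel]
    rw [show ((1 : Matrix.orthogonalGroup (Fin N) ℝ) : Matrix (Fin N) (Fin N) ℝ) = 1 from rfl,
      Matrix.one_mulVec]
  have hgdec : g = (g3 * h) * ((g3 * h)⁻¹ * g) := by group
  rw [hgdec]
  exact mul_mem hkH (Subgroup.subset_closure (Set.mem_union_left _ hstab))
end

section
/- Let $G$ be a compact group with Haar probability measure, $H_1, H_2 \le G$ closed subgroups that topologically generate $G$ (the closed subgroup generated by $H_1 \cup H_2$ is $G$), and $\rho : G \to U(V)$ a finite-dimensional unitary representation. Let $P = \int_G \rho(g)\, dg$, $P_i = \int_{H_i} \rho(h)\, dh$ (integration with respect to the Haar probability measures of $G$, $H_1$, $H_2$). Then $P = \lim_{k \to \infty} (P_1 P_2)^k$ in $B(V)$. -/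
open Filter Topology MeasureTheory

/-!
Let `P` be the Haar average over `G` and `T = P₁ P₂`. Invariance of the Haar measures gives
`P² = P` and `T P = P T = P`, hence `(T - P)ᵏ⁺¹ = Tᵏ⁺¹ - P`, and it suffices that `T - P` has
spectral radius `< 1`. An eigenvector `x` of `T - P` with eigenvalue `|z| ≥ 1` satisfies `P x = 0`
and `T x = z x`. As `P₁` and `P₂` are averages of isometries, `‖x‖ ≤ ‖P₁ P₂ x‖` forces equality
in both averages, so by strict convexity `x` is fixed by `H₂` and then by `H₁`, hence by the
closed subgroup they generate, which is `G`. Thus `P x = x`, and `x = 0`.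
-/

theorem tendsto_pow_atTop_nhds_zero_of_spectralRadius_lt_one {A : Type*} [NormedRing A]
    [NormedAlgebra ℂ A] [CompleteSpace A] {a : A} (h : spectralRadius ℂ a < 1) :
    Tendsto (a ^ ·) atTop (𝓝 0) := by
  obtain ⟨r, har, hr1⟩ := ENNReal.lt_iff_exists_nnreal_btwn.mp h
  have hgelfand := spectrum.pow_nnnorm_pow_one_div_tendsto_nhds_spectralRadius a
  have hle : ∀ᶠ n : ℕ in atTop, ‖a ^ n‖ ≤ r ^ n := by
    filter_upwards [hgelfand.eventually_lt_const har, eventually_ge_atTop 1] with n hn hn1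
    have hn0 : (0 : ℝ) < n := by exact_mod_cast hn1
    rw [one_div, ENNReal.rpow_inv_lt_iff hn0, ENNReal.rpow_natCast, ← ENNReal.coe_pow,
      ENNReal.coe_lt_coe] at hn
    exact_mod_cast hn.le
  exact squeeze_zero_norm' hle
    (tendsto_pow_atTop_nhds_zero_of_lt_one r.2 (by exact_mod_cast hr1))

theorem sub_pow_succ_of_isIdempotentElem {R : Type*} [Ring R] {a p : R} (hp : IsIdempotentElem p)
    (hap : a * p = p) (hpa : p * a = p) (n : ℕ) : (a - p) ^ (n + 1) = a ^ (n + 1) - p := by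
  have hpow : ∀ k : ℕ, a ^ k * p = p := fun k => by
    induction k with
    | zero => rw [pow_zero, one_mul]
    | succ k ih => rw [pow_succ', mul_assoc, ih, hap]
  induction n with
  | zero => rw [zero_add, pow_one, pow_one]
  | succ n ih =>
    rw [pow_succ, ih, sub_mul, mul_sub, mul_sub, hpow, hpa, hp.eq, ← pow_succ]
    abel

theorem ContinuousLinearMap.exists_apply_eq_smul_of_mem_spectrum {𝕜 V : Type*}
    [NontriviallyNormedField 𝕜] [CompleteSpace 𝕜] [NormedAddCommGroup V] [NormedSpace 𝕜 V]
    [FiniteDimensional 𝕜 V] {S : V →L[𝕜] V} {z : 𝕜} (hz : z ∈ spectrum 𝕜 S) :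
    ∃ x, x ≠ 0 ∧ S x = z • x := by
  rw [← AlgEquiv.spectrum_eq (Module.End.toContinuousLinearMap V).symm] at hz
  obtain ⟨x, hx⟩ := (Module.End.hasEigenvalue_iff_mem_spectrum.mpr hz).exists_hasEigenvector
  exact ⟨x, hx.2, hx.apply_eq_smul⟩

theorem ContinuousLinearMap.tendsto_pow_atTop_nhds_of_eigenvector_mem_range {V : Type*}
    [NormedAddCommGroup V] [NormedSpace ℂ V] [FiniteDimensional ℂ V] {T P : V →L[ℂ] V}
    (hP : IsIdempotentElem P) (hTP : T * P = P) (hPT : P * T = P)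
    (hfix : ∀ (x : V) (z : ℂ), T x = z • x → 1 ≤ ‖z‖ → P x = x) :
    Tendsto (T ^ ·) atTop (𝓝 P) := by
  rcases subsingleton_or_nontrivial V with _ | _
  · exact tendsto_const_nhds.congr fun _ => Subsingleton.elim _ _
  have hspec : spectralRadius ℂ (T - P) < 1 := by
    refine (spectrum.spectralRadius_lt_of_forall_lt (T - P) fun z hz => ?_).trans_eq
      ENNReal.coe_one
    obtain ⟨x, hx0, hx⟩ := exists_apply_eq_smul_of_mem_spectrum hz
    by_contra! hz1
    have hz0 : z ≠ 0 := by rintro rfl; simp at hz1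
    have hPx : P x = 0 := by
      have hPS : P * (T - P) = 0 := by rw [mul_sub, hPT, hP.eq, sub_self]
      simpa [hx, hz0] using DFunLike.congr_fun hPS x
    have hTx : T x = z • x := by simpa [hPx] using hx
    exact hx0 (by rw [← hfix x z hTx (by exact_mod_cast hz1), hPx])
  have hlim : Tendsto (fun n => (T - P) ^ (n + 1) + P) atTop (𝓝 P) := by
    simpa using ((tendsto_add_atTop_iff_nat 1).mpr
      (tendsto_pow_atTop_nhds_zero_of_spectralRadius_lt_one hspec)).add_const P
  refine (tendsto_add_atTop_iff_nat 1).mp (hlim.congr fun n => ?_)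
  rw [sub_pow_succ_of_isIdempotentElem hP hTP hPT, sub_add_cancel]

section Average

variable {K : Type*} [Group K] {V : Type*} [NormedAddCommGroup V] [NormedSpace ℂ V]

abbrev repOp (π : K →* (V ≃ₗᵢ[ℂ] V)) (g : K) : V →L[ℂ] V :=
  (π g).toLinearIsometry.toContinuousLinearMap

theorem repOp_mul (π : K →* (V ≃ₗᵢ[ℂ] V)) (g h : K) :
    repOp π (g * h) = repOp π g * repOp π h := by
  ext; simp

variable [TopologicalSpace K] [MeasurableSpace K]

noncomputable def repAverage (ν : Measure K) (π : K →* (V ≃ₗᵢ[ℂ] V)) : V →L[ℂ] V :=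
  ∫ k, repOp π k ∂ν

variable {π : K →* (V ≃ₗᵢ[ℂ] V)} (ν : Measure K)

theorem integrable_repOp [OpensMeasurableSpace K] [FiniteDimensional ℂ V] [IsFiniteMeasure ν]
    (hπ : Continuous (repOp π)) : Integrable (repOp π) ν :=
  .of_bound hπ.aestronglyMeasurable 1 (.of_forall fun g =>
    (π g).toLinearIsometry.norm_toContinuousLinearMap_le)

variable [OpensMeasurableSpace K] [FiniteDimensional ℂ V] (hπ : Continuous (repOp π))
include hπ

theorem repAverage_apply [IsFiniteMeasure ν] (x : V) : repAverage ν π x = ∫ k, π k x ∂ν :=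
  ContinuousLinearMap.integral_apply (integrable_repOp ν hπ) x

theorem norm_repAverage_apply_le [IsProbabilityMeasure ν] (x : V) : ‖repAverage ν π x‖ ≤ ‖x‖ := by
  rw [repAverage_apply ν hπ]
  simpa using norm_integral_le_of_norm_le_const (μ := ν)
    (Eventually.of_forall fun k => ((π k).norm_map x).le)

theorem repAverage_apply_eq_self [IsProbabilityMeasure ν] {x : V} (hx : ∀ k, π k x = x) :
    repAverage ν π x = x := by
  simp [repAverage_apply ν hπ, hx]

-- Equality in `‖∫ π k x‖ ≤ ‖x‖` forces, by strict convexity, `k ↦ π k x` to be a.e. constant,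
-- hence constant by continuity since `ν` charges every open set.
theorem forall_apply_eq_self_of_norm_repAverage_apply_eq [StrictConvexSpace ℝ V]
    [IsProbabilityMeasure ν] [ν.IsOpenPosMeasure] {x : V} (hx : ‖repAverage ν π x‖ = ‖x‖) (k : K) :
    π k x = x := by
  have hcont : Continuous fun k => π k x := (ContinuousLinearMap.apply ℂ V x).continuous.comp hπ
  rcases ae_eq_const_or_norm_integral_lt_of_norm_le_const (μ := ν) (f := fun k => π k x)
    (Eventually.of_forall fun k => ((π k).norm_map x).le) with hconst | hlt
  · have hconst := (hcont.ae_eq_iff_eq ν continuous_const).mp hconst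
    rw [congrFun hconst k, ← congrFun hconst 1, map_one]
    rfl
  · rw [← repAverage_apply ν hπ, hx] at hlt
    simp at hlt

theorem repAverage_mul_of_forall_repOp_mul [IsProbabilityMeasure ν] {A : V →L[ℂ] V}
    (h : ∀ k, repOp π k * A = A) : repAverage ν π * A = A := by
  rw [repAverage, ← integral_mul_const_of_integrable (integrable_repOp ν hπ)]
  simp [h]

theorem mul_repAverage_of_forall_mul_repOp [IsProbabilityMeasure ν] {A : V →L[ℂ] V}
    (h : ∀ k, A * repOp π k = A) : A * repAverage ν π = A := by
  rw [repAverage, ← integral_const_mul_of_integrable (integrable_repOp ν hπ)]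
  simp [h]

theorem repOp_mul_repAverage [IsFiniteMeasure ν] [MeasurableMul K] [ν.IsMulLeftInvariant]
    (g : K) :
    repOp π g * repAverage ν π = repAverage ν π := by
  rw [repAverage, ← integral_const_mul_of_integrable (integrable_repOp ν hπ)]
  simp_rw [← repOp_mul]
  exact integral_mul_left_eq_self (repOp π) g

theorem repAverage_mul_repOp [IsFiniteMeasure ν] [MeasurableMul K] [ν.IsMulRightInvariant]
    (g : K) :
    repAverage ν π * repOp π g = repAverage ν π := by
  rw [repAverage, ← integral_mul_const_of_integrable (integrable_repOp ν hπ)]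
  simp_rw [← repOp_mul]
  exact integral_mul_right_eq_self (repOp π) g

end Average

theorem forall_apply_eq_self_of_norm_le_norm_repAverage_apply_repAverage_apply
    {K₁ K₂ : Type*} [Group K₁] [TopologicalSpace K₁] [MeasurableSpace K₁] [OpensMeasurableSpace K₁]
    [Group K₂] [TopologicalSpace K₂] [MeasurableSpace K₂] [OpensMeasurableSpace K₂]
    {V : Type*} [NormedAddCommGroup V] [NormedSpace ℂ V] [FiniteDimensional ℂ V]
    [StrictConvexSpace ℝ V] {π₁ : K₁ →* (V ≃ₗᵢ[ℂ] V)} {π₂ : K₂ →* (V ≃ₗᵢ[ℂ] V)}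
    (ν₁ : Measure K₁) [IsProbabilityMeasure ν₁] [ν₁.IsOpenPosMeasure]
    (ν₂ : Measure K₂) [IsProbabilityMeasure ν₂] [ν₂.IsOpenPosMeasure]
    (hπ₁ : Continuous (repOp π₁)) (hπ₂ : Continuous (repOp π₂)) {x : V}
    (hx : ‖x‖ ≤ ‖repAverage ν₁ π₁ (repAverage ν₂ π₂ x)‖) :
    (∀ k, π₁ k x = x) ∧ ∀ k, π₂ k x = x := by
  have h₂ : ∀ k, π₂ k x = x := forall_apply_eq_self_of_norm_repAverage_apply_eq ν₂ hπ₂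
    ((norm_repAverage_apply_le ν₂ hπ₂ x).antisymm (hx.trans (norm_repAverage_apply_le ν₁ hπ₁ _)))
  rw [repAverage_apply_eq_self ν₂ hπ₂ h₂] at hx
  exact ⟨forall_apply_eq_self_of_norm_repAverage_apply_eq ν₁ hπ₁
    ((norm_repAverage_apply_le ν₁ hπ₁ x).antisymm hx), h₂⟩

theorem forall_apply_eq_self_of_topologicalClosure_sup_eq_top {G : Type*} [Group G]
    [TopologicalSpace G] [IsTopologicalGroup G] {V : Type*} [NormedAddCommGroup V]
    [NormedSpace ℂ V] (ρ : G →* (V ≃ₗᵢ[ℂ] V)) {H₁ H₂ : Subgroup G}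
    (hgen : (H₁ ⊔ H₂).topologicalClosure = ⊤) {x : V} (hx : Continuous fun g => ρ g x)
    (h₁ : ∀ h ∈ H₁, ρ h x = x) (h₂ : ∀ h ∈ H₂, ρ h x = x) (g : G) : ρ g x = x := by
  let stab : Subgroup G :=
    { carrier := {g | ρ g x = x}
      one_mem' := by simp
      mul_mem' := fun {a b} (ha : ρ a x = x) (hb : ρ b x = x) => show ρ (a * b) x = x by
        rw [map_mul, LinearIsometryEquiv.coe_mul, Function.comp_apply, hb, ha]
      inv_mem' := fun {a} (ha : ρ a x = x) => show ρ a⁻¹ x = x by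
        rw [map_inv]
        exact (ρ a).symm_apply_eq.mpr ha.symm }
  have hstab : IsClosed (stab : Set G) := isClosed_eq hx continuous_const
  have htop : ⊤ ≤ stab := hgen ▸ (H₁ ⊔ H₂).topologicalClosure_minimal (sup_le h₁ h₂) hstab
  exact htop (Subgroup.mem_top g)

theorem isMulRightInvariant_of_isHaarMeasure_of_isProbabilityMeasure {G : Type*} [Group G]
    [TopologicalSpace G] [IsTopologicalGroup G] [LocallyCompactSpace G] [MeasurableSpace G]
    [BorelSpace G] (μ : Measure G) [μ.IsHaarMeasure] [IsProbabilityMeasure μ] :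
    μ.IsMulRightInvariant where
  map_mul_right_eq_self g := by
    have : IsProbabilityMeasure (μ.map (· * g)) :=
      Measure.isProbabilityMeasure_map (measurable_mul_const g).aemeasurable
    exact Measure.isHaarMeasure_eq_of_isProbabilityMeasure _ μ

theorem haar_projection_limit_of_topologically_generating_subgroups_general
    {G : Type*} [Group G] [TopologicalSpace G] [IsTopologicalGroup G] [CompactSpace G]
    [MeasurableSpace G] [BorelSpace G]
    (μ : Measure G) [μ.IsHaarMeasure] [IsProbabilityMeasure μ]
    (H₁ H₂ : Subgroup G)
    (ν₁ : Measure H₁) [ν₁.IsHaarMeasure] [IsProbabilityMeasure ν₁]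
    (ν₂ : Measure H₂) [ν₂.IsHaarMeasure] [IsProbabilityMeasure ν₂]
    (hgen : (H₁ ⊔ H₂).topologicalClosure = ⊤)
    {V : Type*} [NormedAddCommGroup V] [InnerProductSpace ℂ V] [FiniteDimensional ℂ V]
    (ρ : G →* (V ≃ₗᵢ[ℂ] V))
    (hρ : Continuous fun g : G => ((ρ g).toLinearIsometry.toContinuousLinearMap : V →L[ℂ] V)) :
    Tendsto
      (fun k : ℕ =>
        ((∫ h : H₁, ((ρ (h : G)).toLinearIsometry.toContinuousLinearMap : V →L[ℂ] V) ∂ν₁) *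
         (∫ h : H₂, ((ρ (h : G)).toLinearIsometry.toContinuousLinearMap : V →L[ℂ] V) ∂ν₂)) ^ k)
      atTop
      (𝓝 (∫ g : G, ((ρ g).toLinearIsometry.toContinuousLinearMap : V →L[ℂ] V) ∂μ)) := by
  have : μ.IsMulRightInvariant := isMulRightInvariant_of_isHaarMeasure_of_isProbabilityMeasure μ
  have : StrictConvexSpace ℝ V := by
    let _ := InnerProductSpace.rclikeToReal ℂ V
    infer_instance
  have hρ₁ : Continuous (repOp (ρ.comp H₁.subtype)) := hρ.comp continuous_subtype_val
  have hρ₂ : Continuous (repOp (ρ.comp H₂.subtype)) := hρ.comp continuous_subtype_val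
  change Tendsto (fun k => (repAverage ν₁ (ρ.comp H₁.subtype) *
    repAverage ν₂ (ρ.comp H₂.subtype)) ^ k) atTop (𝓝 (repAverage μ ρ))
  have hρP := repOp_mul_repAverage μ hρ
  have hPρ := repAverage_mul_repOp μ hρ
  refine ContinuousLinearMap.tendsto_pow_atTop_nhds_of_eigenvector_mem_range
    (repAverage_mul_of_forall_repOp_mul μ hρ hρP) ?_ ?_ fun x z hx hz => ?_
  · rw [mul_assoc, repAverage_mul_of_forall_repOp_mul ν₂ hρ₂ fun h => hρP h,
      repAverage_mul_of_forall_repOp_mul ν₁ hρ₁ fun h => hρP h]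
  · rw [← mul_assoc, mul_repAverage_of_forall_mul_repOp ν₁ hρ₁ fun h => hPρ h,
      mul_repAverage_of_forall_mul_repOp ν₂ hρ₂ fun h => hPρ h]
  · obtain ⟨h₁, h₂⟩ := forall_apply_eq_self_of_norm_le_norm_repAverage_apply_repAverage_apply
      ν₁ ν₂ hρ₁ hρ₂ <| (le_mul_of_one_le_left (norm_nonneg x) hz).trans_eq
        (by rw [← norm_smul, ← hx]; rfl)
    exact repAverage_apply_eq_self μ hρ (forall_apply_eq_self_of_topologicalClosure_sup_eq_top ρ
      hgen ((ContinuousLinearMap.apply ℂ V x).continuous.comp hρ) (fun h hh => h₁ ⟨h, hh⟩)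
      (fun h hh => h₂ ⟨h, hh⟩))

theorem haar_projection_limit_of_topologically_generating_subgroups
    {G : Type*} [Group G] [TopologicalSpace G] [IsTopologicalGroup G] [CompactSpace G]
    [MeasurableSpace G] [BorelSpace G]
    (μ : Measure G) [μ.IsHaarMeasure] [IsProbabilityMeasure μ]
    (H₁ H₂ : Subgroup G) (hc₁ : IsClosed (H₁ : Set G)) (hc₂ : IsClosed (H₂ : Set G))
    (ν₁ : Measure H₁) [ν₁.IsHaarMeasure] [IsProbabilityMeasure ν₁]
    (ν₂ : Measure H₂) [ν₂.IsHaarMeasure] [IsProbabilityMeasure ν₂]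
    (hgen : (H₁ ⊔ H₂).topologicalClosure = ⊤)
    {V : Type*} [NormedAddCommGroup V] [InnerProductSpace ℂ V] [FiniteDimensional ℂ V]
    (ρ : G →* (V ≃ₗᵢ[ℂ] V))
    (hρ : Continuous fun g : G => ((ρ g).toLinearIsometry.toContinuousLinearMap : V →L[ℂ] V)) :
    Tendsto
      (fun k : ℕ =>
        ((∫ h : H₁, ((ρ (h : G)).toLinearIsometry.toContinuousLinearMap : V →L[ℂ] V) ∂ν₁) *
         (∫ h : H₂, ((ρ (h : G)).toLinearIsometry.toContinuousLinearMap : V →L[ℂ] V) ∂ν₂)) ^ k)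
      atTop
      (𝓝 (∫ g : G, ((ρ g).toLinearIsometry.toContinuousLinearMap : V →L[ℂ] V) ∂μ)) :=
  haar_projection_limit_of_topologically_generating_subgroups_general μ H₁ H₂ ν₁ ν₂ hgen ρ hρ
end
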